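/- arXiv:2309.09788 — 3 statements merged into one kernel-verified Lean document; each statement's English description precedes it below -/
import Mathlib

section
/- Let G be a simple graph with edge set E and maximum degree Δ ≥ 1, and let ρ_max be the largest eigenvalue of the Laplacian matrix L(G) = D(G) - A(G). Then ρ_max > Δ and ρ_max ≤ max{deg(u) + deg(v) : uv ∈ E}. -/
/-!
Lower bound: the Laplacian quadratic form is at least the contribution of the star at a vertex `u`
of maximum degree `Δ`; on the test vector `Δ • 𝟙_u - 𝟙_{N(u)}` this gives the Rayleigh quotient
`Δ + 1`, so `ρ ≥ Δ + 1`.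

Upper bound (Anderson–Morley): normalise an eigenvector `y` for `ρ` so that its maximum `y u` is
positive, and let `w` be a neighbour of `u` minimising `y`. The eigenvalue equations at `u` and `w`
give `ρ y u ≤ deg u (y u - y w)` and `-ρ y w ≤ deg w (y u - y w)`; adding them and dividing by
`y u - y w > 0` yields `ρ ≤ deg u + deg w`.
-/

open Matrix Finset

open scoped MatrixOrder in
theorem Matrix.IsHermitian.dotProduct_mulVec_le_of_spectrum_le {n : Type*} [Fintype n]
    [DecidableEq n] {A : Matrix n n ℝ} (hA : A.IsHermitian) {r : ℝ}
    (hr : ∀ μ ∈ spectrum ℝ A, μ ≤ r) (x : n → ℝ) : x ⬝ᵥ (A *ᵥ x) ≤ r * (x ⬝ᵥ x) := by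
  have hle : A ≤ algebraMap ℝ _ r := le_algebraMap_of_spectrum_le hr hA
  have := (Matrix.le_iff.mp hle).dotProduct_mulVec_nonneg x
  rw [Algebra.algebraMap_eq_smul_one, sub_mulVec, smul_mulVec, one_mulVec, dotProduct_sub,
    dotProduct_smul, star_trivial, smul_eq_mul] at this
  linarith

namespace SimpleGraph

variable {V : Type*} [Fintype V] [DecidableEq V] (G : SimpleGraph V) [DecidableRel G.Adj]

theorem sum_neighborFinset_sq_le_dotProduct_lapMatrix_mulVec (x : V → ℝ) (u : V) :
    ∑ w ∈ G.neighborFinset u, (x u - x w) ^ 2 ≤ x ⬝ᵥ (G.lapMatrix ℝ *ᵥ x) := by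
  set f : V → V → ℝ := fun i j => if G.Adj i j then (x i - x j) ^ 2 else 0 with hf
  have hf_nonneg : ∀ i j, 0 ≤ f i j := fun i j => by
    simp only [hf]; split_ifs <;> positivity
  have hf_symm : ∀ i j, f i j = f j i := fun i j => by
    simp only [hf, G.adj_comm i j]; split_ifs <;> ring
  have hrow : ∑ j, f u j = ∑ w ∈ G.neighborFinset u, (x u - x w) ^ 2 := by
    rw [← Finset.sum_filter, neighborFinset_eq_filter]
  -- the rows other than `u` contain the column of `u`, which duplicates its row
  have hrest : ∑ j, f u j ≤ ∑ i ∈ univ.erase u, ∑ j, f i j := calc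
    ∑ j, f u j = ∑ i ∈ univ.erase u, f i u := by
      rw [Finset.sum_erase _ (by simp [hf])]; exact Finset.sum_congr rfl fun i _ => hf_symm u i
    _ ≤ ∑ i ∈ univ.erase u, ∑ j, f i j :=
      Finset.sum_le_sum fun i _ => Finset.single_le_sum (fun j _ => hf_nonneg i j) (mem_univ u)
  rw [← toLinearMap₂'_apply', lapMatrix_toLinearMap₂', ← Finset.add_sum_erase _ _ (mem_univ u)]
  linarith

theorem degree_add_one_le_of_spectrum_lapMatrix_le {u : V} (hu : 0 < G.degree u) {r : ℝ}
    (hr : ∀ μ ∈ spectrum ℝ (G.lapMatrix ℝ), μ ≤ r) : (G.degree u : ℝ) + 1 ≤ r := by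
  set d : ℝ := (G.degree u : ℝ)
  set x : V → ℝ := fun w => if w = u then d else if G.Adj u w then -1 else 0 with hx
  have hnorm : x ⬝ᵥ x = d * (d + 1) := by
    have hsq : ∀ w, x w * x w = (if w = u then d ^ 2 else 0) + (if G.Adj u w then 1 else 0) := by
      intro w
      by_cases hwu : w = u
      · subst hwu; simp [hx, sq]
      · by_cases hadj : G.Adj u w <;> simp [hx, hwu, hadj]
    simp only [dotProduct, hsq, Finset.sum_add_distrib, Finset.sum_ite_eq', mem_univ, if_true,
      Finset.sum_boole, ← neighborFinset_eq_filter, card_neighborFinset_eq_degree]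
    ring
  have hstar : ∑ w ∈ G.neighborFinset u, (x u - x w) ^ 2 = d * (d + 1) ^ 2 := by
    have hterm : ∀ w ∈ G.neighborFinset u, (x u - x w) ^ 2 = (d + 1) ^ 2 := by
      intro w hw
      rw [mem_neighborFinset] at hw
      simp [hx, hw, hw.ne', sub_neg_eq_add]
    rw [Finset.sum_congr rfl hterm, Finset.sum_const, card_neighborFinset_eq_degree, nsmul_eq_mul]
  have hrayleigh := (G.sum_neighborFinset_sq_le_dotProduct_lapMatrix_mulVec x u).trans
    ((G.posSemidef_lapMatrix ℝ).isHermitian.dotProduct_mulVec_le_of_spectrum_le hr x)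
  rw [hstar, hnorm] at hrayleigh
  have : 0 < d * (d + 1) := by positivity
  nlinarith

theorem exists_adj_le_degree_add_degree_of_lapMatrix_mulVec_eq {ρ : ℝ} (hρ : 0 < ρ)
    {y : V → ℝ} (hy : G.lapMatrix ℝ *ᵥ y = ρ • y) {u : V} (hyu : 0 < y u)
    (hmax : ∀ w, y w ≤ y u) : ∃ w, G.Adj u w ∧ ρ ≤ G.degree u + G.degree w := by
  have heig : ∀ v, ρ * y v = G.degree v * y v - ∑ z ∈ G.neighborFinset v, y z := fun v => by
    rw [← lapMatrix_mulVec_apply, hy, Pi.smul_apply, smul_eq_mul]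
  have hN : (G.neighborFinset u).Nonempty := by
    rw [Finset.nonempty_iff_ne_empty]
    intro hempty
    have := heig u
    rw [← card_neighborFinset_eq_degree, hempty, card_empty, sum_empty, Nat.cast_zero, zero_mul,
      sub_zero] at this
    linarith [mul_pos hρ hyu]
  obtain ⟨w, hw, hw_min⟩ := Finset.exists_min_image (G.neighborFinset u) y hN
  have hu_bound : ρ * y u ≤ G.degree u * (y u - y w) := by
    have : (G.degree u : ℝ) * y w ≤ ∑ z ∈ G.neighborFinset u, y z := by
      rw [← card_neighborFinset_eq_degree, ← nsmul_eq_mul, ← Finset.sum_const]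
      exact Finset.sum_le_sum hw_min
    linarith [heig u]
  have hw_bound : -(ρ * y w) ≤ G.degree w * (y u - y w) := by
    have : ∑ z ∈ G.neighborFinset w, y z ≤ G.degree w * y u := by
      rw [← card_neighborFinset_eq_degree, ← nsmul_eq_mul, ← Finset.sum_const]
      exact Finset.sum_le_sum fun z _ => hmax z
    linarith [heig w]
  have hgap : 0 < y u - y w := by
    by_contra! h
    nlinarith [mul_pos hρ hyu]
  refine ⟨w, (mem_neighborFinset _ _ _).mp hw, le_of_mul_le_mul_right ?_ hgap⟩
  linarith

theorem exists_adj_le_degree_add_degree_of_mem_spectrum {ρ : ℝ} (hρ : 0 < ρ)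
    (hspec : ρ ∈ spectrum ℝ (G.lapMatrix ℝ)) :
    ∃ u v, G.Adj u v ∧ ρ ≤ G.degree u + G.degree v := by
  rw [← Matrix.spectrum_toLin', ← Module.End.hasEigenvalue_iff_mem_spectrum] at hspec
  obtain ⟨v, hv, hv_ne⟩ : ∃ v, G.lapMatrix ℝ *ᵥ v = ρ • v ∧ v ≠ 0 := by
    simpa [Module.End.hasEigenvector_iff] using hspec.exists_hasEigenvector
  have of_pos : ∀ y : V → ℝ, G.lapMatrix ℝ *ᵥ y = ρ • y → (∃ w, 0 < y w) →
      ∃ u v, G.Adj u v ∧ ρ ≤ G.degree u + G.degree v := by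
    rintro y hy ⟨w, hw⟩
    have : Nonempty V := ⟨w⟩
    obtain ⟨u, hu⟩ := Finite.exists_max y
    obtain ⟨v, hadj, hle⟩ :=
      G.exists_adj_le_degree_add_degree_of_lapMatrix_mulVec_eq hρ hy (hw.trans_le (hu w)) hu
    exact ⟨u, v, hadj, hle⟩
  obtain ⟨w, hw⟩ := Function.ne_iff.mp hv_ne
  rcases hw.lt_or_gt with hneg | hpos
  · exact of_pos (-v) (by rw [mulVec_neg, hv, smul_neg]) ⟨w, neg_pos.mpr hneg⟩
  · exact of_pos v hv ⟨w, hpos⟩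

end SimpleGraph

/-- For a simple graph `G` with maximum degree `Δ ≥ 1`, the largest
eigenvalue `ρ_max` of the Laplacian `L(G) = D(G) - A(G)` satisfies `ρ_max > Δ` and
`ρ_max ≤ max{deg u + deg v : uv ∈ E}`. -/
theorem lap_maxEigenvalue_bounds {V : Type*} [Fintype V] [DecidableEq V]
    (G : SimpleGraph V) [DecidableRel G.Adj] (hΔ : 1 ≤ G.maxDegree) (rho : ℝ)
    (hroot : (G.lapMatrix ℝ).charpoly.IsRoot rho)
    (hmax : ∀ mu : ℝ, (G.lapMatrix ℝ).charpoly.IsRoot mu → mu ≤ rho) :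
    (G.maxDegree : ℝ) < rho ∧
      ∃ u v : V, G.Adj u v ∧ rho ≤ (G.degree u : ℝ) + (G.degree v : ℝ) := by
  have hspec : ∀ μ ∈ spectrum ℝ (G.lapMatrix ℝ), μ ≤ rho := fun μ hμ =>
    hmax μ (Matrix.mem_spectrum_iff_isRoot_charpoly.mp hμ)
  have : Nonempty V := by
    by_contra hV
    rw [not_nonempty_iff] at hV
    simp at hΔ
  obtain ⟨u, hu⟩ := G.exists_maximal_degree_vertex
  have hΔρ : (G.maxDegree : ℝ) < rho := by
    rw [hu] at hΔ ⊢
    linarith [G.degree_add_one_le_of_spectrum_lapMatrix_le hΔ hspec]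
  exact ⟨hΔρ, G.exists_adj_le_degree_add_degree_of_mem_spectrum ((Nat.cast_nonneg _).trans_lt hΔρ)
    (Matrix.mem_spectrum_iff_isRoot_charpoly.mpr hroot)⟩
end

section
/- Let G be a connected simple graph on n vertices. If G is bipartite, then the signless Laplacian |L(G)| has 0 as an eigenvalue with multiplicity exactly 1. If G is not bipartite, then det(|L(G)|) is a positive integer divisible by 4. -/
open Polynomial

/-- The signless Laplacian matrix `|L(G)| = D(G) + A(G)` of a simple graph. -/
def SimpleGraph.signlessLapMatrix {V : Type*} [Fintype V] [DecidableEq V]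
    (G : SimpleGraph V) [DecidableRel G.Adj] : Matrix V V ℝ :=
  G.degMatrix ℝ + G.adjMatrix ℝ

/-!
If `s v = ±1` records a proper 2-colouring, then `diagonal s * |L| * diagonal s` is the Laplacian
`L`, so `|L|` and `L` share their characteristic polynomial; as `L` is symmetric, the multiplicity
of the root `0` is `dim ker L`, the number of connected components.

In general `|L| = N Nᵀ` for the unsigned incidence matrix `N`, and `x ᵥ* N = 0` says that
`x u = -x v` along every edge. On a connected graph such an `x ≠ 0` never vanishes, so its sign
is a 2-colouring; hence a connected non-bipartite graph has `|L|` positive definite. Over `ℤ`,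
the row and column sums of `|L|` are the even numbers `2 deg v` and their total is `4 |E|`.
Adding all rows to one row and all columns to the corresponding column does not change the
determinant and leaves that row and column even with a corner divisible by `4`, so the matrix
factors as `diagonal d * M' * diagonal d` with `∏ d = 2`.
-/

open Matrix Finset

namespace Matrix

variable {n R : Type*} [Fintype n] [DecidableEq n]

theorem charpoly_diagonal_mul_mul_diagonal [CommRing R] {s : n → R} (hs : ∀ i, s i * s i = 1)
    (M : Matrix n n R) : (diagonal s * M * diagonal s).charpoly = M.charpoly := by
  have hss : diagonal s * diagonal s = 1 := by
    rw [diagonal_mul_diagonal, ← diagonal_one]; exact congrArg diagonal (funext hs)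
  rw [charpoly_mul_comm, ← mul_assoc, hss, one_mul]

theorem IsSymm.maxGenEigenspace_toLin'_zero [Field R] [LinearOrder R] [IsStrictOrderedRing R]
    {M : Matrix n n R} (hM : M.IsSymm) :
    Module.End.maxGenEigenspace (toLin' M) 0 = LinearMap.ker (toLin' M) := by
  have ker_sq : ∀ y : n → R, M *ᵥ (M *ᵥ y) = 0 → M *ᵥ y = 0 := fun y h => by
    have h0 : y ⬝ᵥ (M *ᵥ (M *ᵥ y)) = 0 := by rw [h, dotProduct_zero]
    rwa [dotProduct_mulVec, ← mulVec_transpose, hM.eq, dotProduct_self_eq_zero] at h0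
  ext x
  simp only [Module.End.mem_maxGenEigenspace, zero_smul, sub_zero, LinearMap.mem_ker]
  refine ⟨?_, fun h => ⟨1, by rwa [pow_one]⟩⟩
  rintro ⟨k, hk⟩
  induction k generalizing x with
  | zero => simp_all
  | succ k ih =>
    rw [pow_succ, Module.End.mul_apply] at hk
    simpa [toLin'_apply] using ker_sq x (by simpa [toLin'_apply] using ih _ hk)

theorem prod_sq_dvd_det [CommRing R] (M : Matrix n n R) (d : n → R)
    (h : ∀ i j, d i * d j ∣ M i j) : (∏ i, d i) ^ 2 ∣ M.det := by
  choose N hN using h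
  have hM : M = diagonal d * of N * diagonal d := by
    ext i j
    rw [mul_diagonal, diagonal_mul, hN, of_apply]
    ring
  rw [hM, det_mul, det_mul, det_diagonal]
  exact ⟨(of N).det, by ring⟩

theorem four_dvd_det_of_even_sums [Nonempty n] (M : Matrix n n ℤ)
    (hrow : ∀ i, 2 ∣ ∑ j, M i j) (hcol : ∀ j, 2 ∣ ∑ i, M i j)
    (htot : 4 ∣ ∑ i, ∑ j, M i j) : 4 ∣ M.det := by
  obtain ⟨v⟩ := ‹Nonempty n›
  set M₁ := M.updateRow v (∑ k, (1 : ℤ) • M k)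
  set M₂ := M₁.updateCol v (fun k => ∑ i, (1 : ℤ) • M₁ k i)
  have hdet : M₂.det = M.det := by
    rw [det_updateCol_sum, det_updateRow_sum, one_smul, one_smul]
  let d : n → ℤ := Function.update 1 v 2
  have hd : ∏ i, d i = 2 := by simp [d, prod_update_of_mem]
  have hM₁ : ∀ i j, M₁ i j = if i = v then ∑ k, M k j else M i j := fun i j => by
    by_cases hi : i = v <;> simp [M₁, hi, Finset.sum_apply (g := M)]
  have hM₂ : ∀ i j, M₂ i j = if j = v then ∑ k, M₁ i k else M₁ i j := fun i j => by
    by_cases hj : j = v <;> simp [M₂, hj]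
  rw [← hdet, show (4 : ℤ) = (∏ i, d i) ^ 2 by rw [hd]; norm_num]
  refine prod_sq_dvd_det _ _ fun i j => ?_
  by_cases hi : i = v <;> by_cases hj : j = v
  · subst hi hj
    simpa [d, hM₁, hM₂, sum_comm (γ := n) (f := fun a b => M a b)] using htot
  · subst hi
    simpa [d, hM₁, hM₂, hj] using hcol j
  · subst hj
    simpa [d, hM₁, hM₂, hi] using hrow i
  · simp [d, hM₁, hM₂, hi, hj]

end Matrix

namespace SimpleGraph

section

variable {V R : Type*} {G : SimpleGraph V} [AddCommGroup R] [LinearOrder R] {x : V → R}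

theorem Reachable.abs_eq_of_forall_adj (hx : ∀ u v, G.Adj u v → x u + x v = 0) {u v : V}
    (h : G.Reachable u v) : |x u| = |x v| := by
  obtain ⟨w⟩ := h
  induction w with
  | nil => rfl
  | cons hadj _ ih => rw [← ih, eq_neg_of_add_eq_zero_left (hx _ _ hadj), abs_neg]

theorem Preconnected.colorable_two_of_forall_adj_add_eq_zero [IsOrderedAddMonoid R]
    (hG : G.Preconnected) (hx : ∀ u v, G.Adj u v → x u + x v = 0) (hx0 : x ≠ 0) :
    G.Colorable 2 := by
  obtain ⟨v₀, hv₀⟩ := Function.ne_iff.mp hx0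
  have hne : ∀ v, x v ≠ 0 := fun v => by
    rw [← abs_ne_zero, (hG v v₀).abs_eq_of_forall_adj hx, abs_ne_zero]; exact hv₀
  let c : G.Coloring Bool := Coloring.mk (fun v => decide (0 < x v)) fun {u v} huv => by
    have hvu : x v = -x u := eq_neg_of_add_eq_zero_right (hx u v huv)
    rcases (hne u).lt_or_gt with hu | hu
    · simp [hvu, hu.not_gt, hu]
    · simp [hvu, hu, hu.le]
  simpa using c.colorable

end

variable {V : Type*} [Fintype V] [DecidableEq V] (G : SimpleGraph V) [DecidableRel G.Adj]

theorem incMatrix_mul_transpose_eq_signlessLapMatrix :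
    G.incMatrix ℝ * (G.incMatrix ℝ)ᵀ = G.signlessLapMatrix := by
  rw [incMatrix_mul_transpose]
  ext i j
  by_cases hij : i = j
  · subst hij; simp [signlessLapMatrix, degMatrix]
  · simp [signlessLapMatrix, degMatrix, hij, adjMatrix_apply]

theorem vecMul_incMatrix_apply_of_adj {R : Type*} [NonAssocSemiring R] (x : V → R) {u v : V}
    (huv : G.Adj u v) : (x ᵥ* G.incMatrix R) s(u, v) = x u + x v := by
  have hinc : ∀ a, s(u, v) ∈ G.incidenceSet a ↔ a ∈ ({u, v} : Finset V) := fun a => by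
    simp [incidenceSet, huv, eq_comm]
  simp only [vecMul, dotProduct, incMatrix_apply', mul_ite, mul_one, mul_zero, hinc]
  rw [← sum_filter, filter_mem_eq_inter, univ_inter, sum_pair huv.ne]

theorem posDef_signlessLapMatrix (hG : G.Preconnected) (h : ¬ G.Colorable 2) :
    G.signlessLapMatrix.PosDef := by
  rw [← incMatrix_mul_transpose_eq_signlessLapMatrix, ← conjTranspose_eq_transpose_of_trivial]
  refine .mul_conjTranspose_self _ fun x y hxy => sub_eq_zero.mp ?_
  beta_reduce at hxy
  have hadj : ∀ u v, G.Adj u v → (x - y) u + (x - y) v = 0 := fun u v huv => by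
    rw [← vecMul_incMatrix_apply_of_adj G _ huv, sub_vecMul, hxy, sub_self, Pi.zero_apply]
  by_contra hne
  exact h (hG.colorable_two_of_forall_adj_add_eq_zero hadj hne)

theorem diagonal_mul_signlessLapMatrix_mul_diagonal {s : V → ℝ} (hs : ∀ v, s v * s v = 1)
    (hadj : ∀ u v, G.Adj u v → s u * s v = -1) :
    diagonal s * G.signlessLapMatrix * diagonal s = G.lapMatrix ℝ := by
  ext i j
  rw [mul_diagonal, diagonal_mul]
  by_cases hij : i = j
  · subst hij
    simp [signlessLapMatrix, lapMatrix, degMatrix, mul_comm (s i), mul_assoc, hs]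
  · by_cases h : G.Adj i j
    · simp [signlessLapMatrix, lapMatrix, degMatrix, hij, h, hadj]
    · simp [signlessLapMatrix, lapMatrix, degMatrix, hij, h]

theorem charpoly_signlessLapMatrix_of_colorable_two (h : G.Colorable 2) :
    G.signlessLapMatrix.charpoly = (G.lapMatrix ℝ).charpoly := by
  obtain ⟨c⟩ := h
  let s : V → ℝ := fun v => if c v = 0 then 1 else -1
  have hs : ∀ v, s v * s v = 1 := fun v => by by_cases hv : c v = 0 <;> simp [s, hv]
  have hadj : ∀ u v, G.Adj u v → s u * s v = -1 := fun u v huv => by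
    have hne := c.valid huv
    simp only [s]
    generalize c u = a, c v = b at hne ⊢
    fin_cases a <;> fin_cases b <;> simp_all
  rw [← diagonal_mul_signlessLapMatrix_mul_diagonal G hs hadj,
    charpoly_diagonal_mul_mul_diagonal hs]

theorem rootMultiplicity_zero_charpoly_lapMatrix :
    (G.lapMatrix ℝ).charpoly.rootMultiplicity 0 = Fintype.card G.ConnectedComponent := by
  rw [← charpoly_toLin', ← LinearMap.finrank_maxGenEigenspace_eq,
    (isSymm_lapMatrix (R := ℝ) G).maxGenEigenspace_toLin'_zero,
    card_connectedComponent_eq_finrank_ker_toLin'_lapMatrix]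

theorem map_intCast_degMatrix_add_adjMatrix :
    (G.degMatrix ℤ + G.adjMatrix ℤ).map (fun x => (x : ℝ)) = G.signlessLapMatrix := by
  ext i j
  by_cases hij : i = j <;> by_cases h : G.Adj i j <;>
    simp [signlessLapMatrix, degMatrix, adjMatrix_apply, hij, h]

theorem sum_degMatrix_add_adjMatrix_apply {R : Type*} [NonAssocSemiring R] (i : V) :
    ∑ j, (G.degMatrix R + G.adjMatrix R) i j = 2 * G.degree i := by
  simp only [Matrix.add_apply, sum_add_distrib, degMatrix, diagonal_apply, sum_ite_eq, mem_univ,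
    if_true, adjMatrix_apply, ← degree_eq_sum_if_adj, two_mul]

theorem four_dvd_det_degMatrix_add_adjMatrix [Nonempty V] :
    4 ∣ (G.degMatrix ℤ + G.adjMatrix ℤ).det := by
  have hsymm : (G.degMatrix ℤ + G.adjMatrix ℤ).IsSymm :=
    (G.isSymm_degMatrix (R := ℤ)).add (G.isSymm_adjMatrix (α := ℤ))
  refine four_dvd_det_of_even_sums _ (fun i => ?_) (fun j => ?_) ?_
  · rw [sum_degMatrix_add_adjMatrix_apply]
    exact dvd_mul_right _ _
  · rw [sum_congr rfl fun i _ => hsymm.apply j i, sum_degMatrix_add_adjMatrix_apply]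
    exact dvd_mul_right _ _
  · simp_rw [sum_degMatrix_add_adjMatrix_apply, ← mul_sum, ← Nat.cast_sum,
      sum_degrees_eq_twice_card_edges]
    exact ⟨#G.edgeFinset, by push_cast; ring⟩

end SimpleGraph

/-- Let `G` be a connected simple graph. If `G` is bipartite then the
signless Laplacian has `0` as an eigenvalue of multiplicity exactly `1`. If `G` is not
bipartite then `det |L(G)|` is a positive integer divisible by `4`. -/
theorem signlessLap_zero_eigenvalue {V : Type*} [Fintype V] [DecidableEq V]
    (G : SimpleGraph V) [DecidableRel G.Adj] (hconn : G.Connected) :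
    (G.Colorable 2 → (G.signlessLapMatrix).charpoly.rootMultiplicity 0 = 1) ∧
    (¬ G.Colorable 2 → ∃ z : ℤ, (G.signlessLapMatrix).det = (z : ℝ) ∧ 0 < z ∧ 4 ∣ z) := by
  have : Nonempty V := hconn.nonempty
  refine ⟨fun hcol => ?_, fun hncol => ?_⟩
  · rw [G.charpoly_signlessLapMatrix_of_colorable_two hcol,
      G.rootMultiplicity_zero_charpoly_lapMatrix]
    exact le_antisymm (Fintype.card_le_one_iff_subsingleton.mpr
      hconn.preconnected.subsingleton_connectedComponent) Fintype.card_pos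
  · have hdet : G.signlessLapMatrix.det = ((G.degMatrix ℤ + G.adjMatrix ℤ).det : ℤ) := by
      rw [Int.cast_det, G.map_intCast_degMatrix_add_adjMatrix]
    have hpos := (G.posDef_signlessLapMatrix hconn.preconnected hncol).det_pos
    refine ⟨_, hdet, ?_, G.four_dvd_det_degMatrix_add_adjMatrix⟩
    exact_mod_cast hdet ▸ hpos
end

section
/- For any simple graph G, every eigenvalue of the adjacency matrix of the line graph line(G) is at least -2. -/
/-!
If `N` is the vertex–edge incidence matrix of `G`, then `Nᵀ N = A(line G) + 2 I`: every edge has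
two endpoints, and two distinct edges share at most one vertex, exactly when they are adjacent in
the line graph. So `A(line G) + 2 I` is positive semidefinite, and every eigenvalue of
`A(line G)` is at least `-2`.
-/

open Finset Matrix

namespace Matrix

variable {n : Type*} [Fintype n] [DecidableEq n]

theorem neg_le_of_isRoot_charpoly_of_posSemidef_add_smul_one {A : Matrix n n ℝ} {c μ : ℝ}
    (hA : (A + c • 1).PosSemidef) (hμ : A.charpoly.IsRoot μ) : -c ≤ μ := by
  have hspec : μ + c ∈ spectrum ℝ (A + c • 1) := by
    rw [add_comm A, ← Algebra.algebraMap_eq_smul_one, spectrum.add_mem_add_iff]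
    exact mem_spectrum_of_isRoot_charpoly hμ
  have hnonneg : 0 ≤ μ + c := (posSemidef_iff_isHermitian_and_spectrum_nonneg.mp hA).2 hspec
  linarith

end Matrix

namespace SimpleGraph

variable (R : Type*) {α : Type*} (G : SimpleGraph α) [DecidableEq α] [DecidableRel G.Adj]

def edgeIncMatrix [Zero R] [One R] : Matrix α G.edgeSet R :=
  (G.incMatrix R).submatrix id (↑)

variable {R} [Fintype α] [NonAssocSemiring R]

theorem incMatrix_transpose_mul_apply (e f : Sym2 α) :
    ((G.incMatrix R)ᵀ * G.incMatrix R) e f =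
      #{a | e ∈ G.incidenceSet a ∧ f ∈ G.incidenceSet a} := by
  simp only [mul_apply, transpose_apply, incMatrix_apply', ite_zero_mul_ite_zero, one_mul,
    sum_boole]

theorem incMatrix_transpose_mul_apply_of_ne [DecidableRel G.lineGraph.Adj] {e f : G.edgeSet}
    (hef : e ≠ f) :
    ((G.incMatrix R)ᵀ * G.incMatrix R) e f = if G.lineGraph.Adj e f then 1 else 0 := by
  have hmem (a : α) : (e : Sym2 α) ∈ G.incidenceSet a ∧ (f : Sym2 α) ∈ G.incidenceSet a ↔
      a ∈ (e : Sym2 α) ∧ a ∈ (f : Sym2 α) := by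
    simp [incidenceSet, e.2, f.2]
  rw [incMatrix_transpose_mul_apply, filter_congr fun a _ => hmem a]
  split_ifs with hadj
  · obtain ⟨-, v, hve, hvf⟩ := lineGraph_adj_iff_exists.mp hadj
    rw [card_eq_one.mpr ⟨v, ?_⟩, Nat.cast_one]
    ext a
    simp only [mem_filter, mem_univ, true_and, mem_singleton]
    refine ⟨fun ⟨hae, haf⟩ => ?_, by rintro rfl; exact ⟨hve, hvf⟩⟩
    by_contra hav
    exact hef (Subtype.ext (Sym2.eq_of_ne_mem hav hae hve haf hvf))
  · rw [card_eq_zero.mpr (filter_eq_empty_iff.mpr fun a _ ha => hadj ?_), Nat.cast_zero]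
    exact lineGraph_adj_iff_exists.mpr ⟨hef, a, ha⟩

theorem edgeIncMatrix_transpose_mul_self [DecidableRel G.lineGraph.Adj] :
    (G.edgeIncMatrix R)ᵀ * G.edgeIncMatrix R = G.lineGraph.adjMatrix R + 2 := by
  ext e f
  change ((G.incMatrix R)ᵀ * G.incMatrix R) e f = _
  by_cases hef : e = f
  · subst hef
    simp [incMatrix_transpose_mul_diag, e.2, ofNat_apply]
  · simp [incMatrix_transpose_mul_apply_of_ne G hef, ofNat_apply, hef]

end SimpleGraph

/-- Every adjacency eigenvalue of a line graph is at least `-2`. -/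
theorem lineGraph_eigenvalue_ge_neg_two {V : Type*} [Fintype V] [DecidableEq V]
    (G : SimpleGraph V) [DecidableRel G.Adj] [DecidableRel G.lineGraph.Adj]
    (lam : ℝ) (h : (G.lineGraph.adjMatrix ℝ).charpoly.IsRoot lam) :
    -2 ≤ lam := by
  have hpsd : (G.lineGraph.adjMatrix ℝ + (2 : ℝ) • 1).PosSemidef := by
    rw [two_smul, one_add_one_eq_two, ← G.edgeIncMatrix_transpose_mul_self]
    simpa using posSemidef_conjTranspose_mul_self (G.edgeIncMatrix ℝ)
  exact neg_le_of_isRoot_charpoly_of_posSemidef_add_smul_one hpsd h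
end
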